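/- In the balanced case where all K samples have common size n (so N = Kn), the between-sample dispersion simplifies: T_α − (1/K) Σ_{j<k} (n/2)(2g_α(A_j,A_k) − g_α(A_j,A_j) − g_α(A_k,A_k)) = Σ_j (n/2) g_α(A_j,A_j). That is, T_α − S_α = W_α for the balanced design. -/

import Mathlib

open Finset

/-- The Gini mean of `α`-powered Euclidean distances between two finite
families of points. -/
noncomputable def giniMean {p : ℕ} {ι κ : Type*} [Fintype ι] [Fintype κ] (α : ℝ)
    (A : ι → EuclideanSpace ℝ (Fin p)) (B : κ → EuclideanSpace ℝ (Fin p)) : ℝ :=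
  (1 / ((Fintype.card ι : ℝ) * (Fintype.card κ : ℝ))) *
    ∑ i : ι, ∑ m : κ, ‖A i - B m‖ ^ α

/-!
The pooled Gini mean of the balanced design is the average of the `K²` pairwise means
`g(A_j, A_k)`. Since `g` is symmetric, the sum of `2g_{jk} - g_{jj} - g_{kk}` over `j < k` is
half of its sum over all pairs, where the diagonal contributes nothing; this equals
`Σ_{j,k} g_{jk} - K Σ_j g_{jj}`, and subtracting it from `T_α` leaves exactly `W_α`.
-/

section Gini

variable {p : ℕ} {ι κ ι' κ' : Type*} [Fintype ι] [Fintype κ] [Fintype ι'] [Fintype κ']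

theorem giniMean_comm (α : ℝ) (A : ι → EuclideanSpace ℝ (Fin p))
    (B : κ → EuclideanSpace ℝ (Fin p)) : giniMean α A B = giniMean α B A := by
  simp only [giniMean, mul_comm (Fintype.card ι : ℝ), norm_sub_rev (A _)]
  rw [sum_comm]

theorem giniMean_pooled (α : ℝ) (A : ι → κ → EuclideanSpace ℝ (Fin p))
    (B : ι' → κ' → EuclideanSpace ℝ (Fin p)) :
    giniMean α (fun x : ι × κ => A x.1 x.2) (fun y : ι' × κ' => B y.1 y.2) =
      1 / ((Fintype.card ι : ℝ) * Fintype.card ι') *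
        ∑ j : ι, ∑ k : ι', giniMean α (A j) (B k) := by
  simp only [giniMean, Fintype.card_prod, Fintype.sum_prod_type, mul_sum, Nat.cast_mul]
  refine sum_congr rfl fun j _ => ?_
  rw [sum_comm]
  refine sum_congr rfl fun k _ => sum_congr rfl fun i _ => sum_congr rfl fun m _ => ?_
  simp only [one_div, mul_inv]
  ring

end Gini

theorem Finset.sum_sum_eq_two_nsmul_sum_sum_ite_lt_add_sum_diag {ι M : Type*} [Fintype ι]
    [LinearOrder ι] [AddCommMonoid M] (f : ι → ι → M) (hf : ∀ j k, f j k = f k j) :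
    ∑ j, ∑ k, f j k = 2 • ∑ j, ∑ k, (if j < k then f j k else 0) + ∑ j, f j j := by
  have hsplit : ∀ j k, f j k = ((if j < k then f j k else 0) + if k < j then f j k else 0) +
      if j = k then f j k else 0 := by
    intro j k
    rcases lt_trichotomy j k with h | rfl | h
    · simp [h, h.not_gt, h.ne]
    · simp
    · simp [h, h.not_gt, h.ne']
  have hswap : ∑ j, ∑ k, (if k < j then f j k else 0) = ∑ j, ∑ k, if j < k then f j k else 0 := by
    rw [sum_comm]
    simp only [hf]
  calc ∑ j, ∑ k, f j k
      = ∑ j, ∑ k, (((if j < k then f j k else 0) + if k < j then f j k else 0) +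
          if j = k then f j k else 0) :=
        sum_congr rfl fun j _ => sum_congr rfl fun k _ => hsplit j k
    _ = _ := by simp only [sum_add_distrib, hswap, sum_ite_eq, mem_univ, if_true, two_nsmul]

theorem sum_sum_ite_lt_two_mul_sub_diag {ι : Type*} [Fintype ι] [LinearOrder ι]
    (g : ι → ι → ℝ) (hg : ∀ j k, g j k = g k j) :
    ∑ j, ∑ k, (if j < k then 2 * g j k - g j j - g k k else 0) =
      ∑ j, ∑ k, g j k - Fintype.card ι * ∑ j, g j j := by
  have hsum := Finset.sum_sum_eq_two_nsmul_sum_sum_ite_lt_add_sum_diag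
    (fun j k => 2 * g j k - g j j - g k k) fun j k => by rw [hg j k]; ring
  simp only [sum_sub_distrib, ← mul_sum, sum_const, card_univ, nsmul_eq_mul,
    Nat.cast_ofNat] at hsum
  linarith

theorem disco_balanced_decomposition_general
    (p K n : ℕ) (α : ℝ)
    (A : Fin K → Fin n → EuclideanSpace ℝ (Fin p)) :
    ((K * n : ℕ) : ℝ) / 2 *
        giniMean α (fun ji : Fin K × Fin n => A ji.1 ji.2)
          (fun ji : Fin K × Fin n => A ji.1 ji.2)
      - (1 / (K : ℝ)) * ∑ j : Fin K, ∑ k : Fin K,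
          (if j < k then
            ((n : ℝ) / 2) *
              (2 * giniMean α (A j) (A k) - giniMean α (A j) (A j)
                - giniMean α (A k) (A k))
          else 0)
      = ∑ j : Fin K, ((n : ℝ) / 2) * giniMean α (A j) (A j) := by
  obtain rfl | hK := eq_or_ne K 0
  · simp
  have hK' : (K : ℝ) ≠ 0 := Nat.cast_ne_zero.mpr hK
  simp only [← mul_ite_zero, ← mul_sum]
  rw [giniMean_pooled, sum_sum_ite_lt_two_mul_sub_diag _ fun j k => giniMean_comm α (A j) (A k),
    Fintype.card_fin, Nat.cast_mul]
  field_simp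
  ring

/-- Balanced-design DISCO decomposition: with `K` samples of common size `n`,
`T_α − S_α = W_α` where `S_α = (1/K) Σ_{j<k} (n/2)(2g_{jk} − g_{jj} − g_{kk})`. -/
theorem disco_balanced_decomposition
    (p K n : ℕ) (α : ℝ) (hα0 : 0 < α) (hα2 : α ≤ 2) (hn : 1 ≤ n)
    (A : Fin K → Fin n → EuclideanSpace ℝ (Fin p)) :
    ((K * n : ℕ) : ℝ) / 2 *
        giniMean α (fun ji : Fin K × Fin n => A ji.1 ji.2)
          (fun ji : Fin K × Fin n => A ji.1 ji.2)
      - (1 / (K : ℝ)) * ∑ j : Fin K, ∑ k : Fin K,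
          (if j < k then
            ((n : ℝ) / 2) *
              (2 * giniMean α (A j) (A k) - giniMean α (A j) (A j)
                - giniMean α (A k) (A k))
          else 0)
      = ∑ j : Fin K, ((n : ℝ) / 2) * giniMean α (A j) (A j) :=
  disco_balanced_decomposition_general p K n α A
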